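/- arXiv:1602.01042 — 7 statements merged into one kernel-verified Lean document; each statement's English description precedes it below -/
import Mathlib

section
/- For all natural numbers l, k, s, the identity ∑_r a_{l,k,r} · C(r,s) = b_{l,s} · C(l-2s, k-s) holds, where a_{l,k,r} is the number of cyclic binary sequences of length l with exactly k ones and exactly r ones that are immediately followed by a zero, and b_{l,s} is the number of cyclic binary sequences of length l with exactly s ones, no two of which are cyclically consecutive. -/
/-- Cyclic successor of an index in `Fin l`. -/
def cyc {l : ℕ} (i : Fin l) : Fin l := ⟨(i.val + 1) % l, Nat.mod_lt _ i.pos⟩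

/-- `a l k r`: the number of cyclic binary sequences of length `l` with exactly `k` ones
and exactly `r` ones that are immediately followed (cyclically) by a zero. -/
def cycA (l k r : ℕ) : ℕ :=
  (Finset.univ.filter (fun f : Fin l → Bool =>
    (Finset.univ.filter (fun i => f i = true)).card = k ∧
    (Finset.univ.filter (fun i => f i = true ∧ f (cyc i) = false)).card = r)).card

/-- `b l s`: the number of cyclic binary sequences of length `l` with exactly `s` ones,
no two of which are cyclically consecutive. -/
def cycB (l s : ℕ) : ℕ :=
  (Finset.univ.filter (fun f : Fin l → Bool =>
    (Finset.univ.filter (fun i => f i = true)).card = s ∧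
    ∀ i : Fin l, f i = true → f (cyc i) = false)).card

open Finset

def ones {l : ℕ} (f : Fin l → Bool) : Finset (Fin l) :=
  univ.filter (fun i => f i = true)

def descs {l : ℕ} (f : Fin l → Bool) : Finset (Fin l) :=
  univ.filter (fun i => f i = true ∧ f (cyc i) = false)

lemma mem_ones {l : ℕ} {f : Fin l → Bool} {i : Fin l} : i ∈ ones f ↔ f i = true := by
  simp [ones]

lemma mem_descs {l : ℕ} {f : Fin l → Bool} {i : Fin l} :
    i ∈ descs f ↔ f i = true ∧ f (cyc i) = false := by
  simp [descs]

lemma descs_subset_ones {l : ℕ} (f : Fin l → Bool) : descs f ⊆ ones f := by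
  intro i hi; rw [mem_ones]; exact (mem_descs.mp hi).1

lemma cyc_injective {l : ℕ} : Function.Injective (cyc (l := l)) := by
  intro a b h
  have ha := a.isLt; have hb := b.isLt
  have hmod : (a.val + 1) % l = (b.val + 1) % l := congrArg Fin.val h
  have ea : (a.val + 1) % l = if a.val + 1 = l then 0 else a.val + 1 := by
    split
    · simp_all
    · exact Nat.mod_eq_of_lt (by omega)
  have eb : (b.val + 1) % l = if b.val + 1 = l then 0 else b.val + 1 := by
    split
    · simp_all
    · exact Nat.mod_eq_of_lt (by omega)
  apply Fin.ext
  rw [ea, eb] at hmod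
  split at hmod <;> split at hmod <;> omega

lemma ones_decide {l : ℕ} (T : Finset (Fin l)) : ones (fun i => decide (i ∈ T)) = T := by
  ext i; simp [mem_ones]

lemma ones_inj {l : ℕ} (f g : Fin l → Bool) (h : ones f = ones g) : f = g := by
  funext i
  have := Finset.ext_iff.mp h i
  simp only [mem_ones] at this
  cases hf : f i <;> cases hg : g i <;> simp_all

lemma card_funs {l : ℕ} (Pr : Finset (Fin l) → Prop) [DecidablePred Pr] :
    (univ.filter (fun f : Fin l → Bool => Pr (ones f))).card
      = (univ.filter Pr).card := by
  apply Finset.card_bij (fun f _ => ones f)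
  · intro f hf; simp only [mem_filter, mem_univ, true_and] at hf ⊢; exact hf
  · intro f _ g _ h; exact ones_inj f g h
  · intro T hT
    refine ⟨fun i => decide (i ∈ T), ?_, ones_decide T⟩
    simp only [mem_filter, mem_univ, true_and] at hT ⊢
    rwa [ones_decide]

lemma count_subsets {l : ℕ} (A : Finset (Fin l)) (m : ℕ) :
    (univ.filter (fun h : Fin l → Bool => ones h ⊆ A ∧ (ones h).card = m)).card
      = A.card.choose m := by
  rw [card_funs (fun T => T ⊆ A ∧ T.card = m), ← Finset.card_powersetCard]
  congr 1
  ext T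
  simp [Finset.mem_powersetCard]

lemma cycA_eq {l k r : ℕ} :
    cycA l k r = (univ.filter (fun f : Fin l → Bool =>
      (ones f).card = k ∧ (descs f).card = r)).card := rfl

lemma cycB_eq {l s : ℕ} :
    cycB l s = (univ.filter (fun f : Fin l → Bool =>
      (ones f).card = s ∧ ∀ i : Fin l, f i = true → f (cyc i) = false)).card := rfl

lemma fiber_card {l k s : ℕ} (hsk : s ≤ k) (S : Finset (Fin l))
    (hcard : S.card = s) (hind : ∀ i ∈ S, cyc i ∉ S) :
    (univ.filter (fun f : Fin l → Bool => (ones f).card = k ∧ S ⊆ descs f)).card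
      = (l - 2 * s).choose (k - s) := by
  have hdisj : Disjoint S (S.image cyc) := by
    rw [Finset.disjoint_left]
    intro a ha hb
    obtain ⟨b, hb2, rfl⟩ := Finset.mem_image.mp hb
    exact hind b hb2 ha
  have himg : (S.image cyc).card = s := by
    rw [Finset.card_image_of_injective _ cyc_injective, hcard]
  have hUcard : (S ∪ S.image cyc).card = 2 * s := by
    rw [Finset.card_union_of_disjoint hdisj, hcard, himg]; ring
  set A := (S ∪ S.image cyc)ᶜ with hAdef
  have hA : A.card = l - 2 * s := by
    rw [hAdef, Finset.card_compl, hUcard, Fintype.card_fin]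
  rw [← hA, ← count_subsets A (k - s)]
  apply Finset.card_bij (fun f _ => fun j => f j && decide (j ∉ S))
  · intro f hf
    simp only [mem_filter, mem_univ, true_and] at hf
    obtain ⟨h1, h2⟩ := hf
    have hones : ones (fun j => f j && decide (j ∉ S)) = ones f \ S := by
      ext j; simp [mem_ones]
    simp only [mem_filter, mem_univ, true_and, hones]
    constructor
    · intro j hj
      rw [Finset.mem_sdiff, mem_ones] at hj
      rw [hAdef, Finset.mem_compl, Finset.mem_union]
      push_neg
      refine ⟨hj.2, ?_⟩
      intro hmem
      obtain ⟨b, hb, rfl⟩ := Finset.mem_image.mp hmem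
      have := (mem_descs.mp (h2 hb)).2
      rw [this] at hj
      exact absurd hj.1 (by simp)
    · rw [Finset.card_sdiff_of_subset (h2.trans (descs_subset_ones f)), h1, hcard]
  · intro f hf g hg h
    simp only [mem_filter, mem_univ, true_and] at hf hg
    funext j
    by_cases hj : j ∈ S
    · rw [(mem_descs.mp (hf.2 hj)).1, (mem_descs.mp (hg.2 hj)).1]
    · have := congrFun h j
      simpa [hj] using this
  · intro h hh
    simp only [mem_filter, mem_univ, true_and] at hh
    obtain ⟨hsub, hm⟩ := hh
    have hhS : ∀ j ∈ S, h j = false := by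
      intro j hj
      by_contra hc
      have : j ∈ ones h := mem_ones.mpr (by simpa using hc)
      have := hsub this
      rw [hAdef, Finset.mem_compl, Finset.mem_union] at this
      exact this (Or.inl hj)
    have hhC : ∀ j ∈ S.image cyc, h j = false := by
      intro j hj
      by_contra hc
      have : j ∈ ones h := mem_ones.mpr (by simpa using hc)
      have := hsub this
      rw [hAdef, Finset.mem_compl, Finset.mem_union] at this
      exact this (Or.inr hj)
    refine ⟨fun j => h j || decide (j ∈ S), ?_, ?_⟩
    · have hones : ones (fun j => h j || decide (j ∈ S)) = ones h ∪ S := by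
        ext j; simp [mem_ones]
      have hd : Disjoint (ones h) S := by
        rw [Finset.disjoint_left]
        intro a ha haS
        exact absurd (mem_ones.mp ha) (by simp [hhS a haS])
      simp only [mem_filter, mem_univ, true_and, hones]
      constructor
      · rw [Finset.card_union_of_disjoint hd, hm, hcard]; omega
      · intro i hi
        rw [mem_descs]
        constructor
        · simp [hi]
        · have h1 : h (cyc i) = false := hhC _ (Finset.mem_image_of_mem cyc hi)
          have h2 : cyc i ∉ S := hind i hi
          simp [h1, h2]
    · funext j
      by_cases hj : j ∈ S
      · simp [hj, hhS j hj]
      · simp [hj]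

theorem stmt0 (l k s : ℕ) :
    ∑ r ∈ Finset.range (l + 1), cycA l k r * r.choose s =
      cycB l s * (if s ≤ k then (l - 2 * s).choose (k - s) else 0) := by
  by_cases hsk : s ≤ k
  case neg =>
    rw [if_neg hsk, mul_zero]
    apply Finset.sum_eq_zero
    intro r _
    rcases Nat.eq_zero_or_pos (cycA l k r) with h | h
    · rw [h, zero_mul]
    · rw [cycA_eq] at h
      obtain ⟨f, hf⟩ := Finset.card_pos.mp h
      simp only [mem_filter, mem_univ, true_and] at hf
      have hrk : r ≤ k := by
        rw [← hf.1, ← hf.2]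
        exact Finset.card_le_card (descs_subset_ones f)
      rw [Nat.choose_eq_zero_of_lt (by omega), mul_zero]
  rw [if_pos hsk]
  classical
  set P : Finset ((Fin l → Bool) × Finset (Fin l)) :=
    univ.filter (fun p => (ones p.1).card = k ∧ p.2 ⊆ descs p.1 ∧ p.2.card = s) with hP
  set t : Finset (Fin l → Bool) := univ.filter (fun f => (ones f).card = k) with ht
  -- LHS = P.card
  have hmaps1 : ∀ p ∈ P, p.1 ∈ t := by
    intro p hp
    rw [hP, mem_filter] at hp
    rw [ht, mem_filter]
    exact ⟨mem_univ _, hp.2.1⟩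
  have hfib1 : ∀ f ∈ t, (P.filter (fun p => p.1 = f)).card = (descs f).card.choose s := by
    intro f hf
    rw [ht, mem_filter] at hf
    rw [← Finset.card_powersetCard]
    apply Finset.card_bij (fun p _ => p.2)
    · intro p hp
      simp only [hP, mem_filter, mem_univ, true_and] at hp
      obtain ⟨⟨_, h2, h3⟩, h4⟩ := hp
      rw [Finset.mem_powersetCard]
      exact ⟨h4 ▸ h2, h3⟩
    · intro p hp q hq h
      simp only [hP, mem_filter] at hp hq
      exact Prod.ext (hp.2.trans hq.2.symm) h
    · intro T hT
      rw [Finset.mem_powersetCard] at hT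
      exact ⟨(f, T), Finset.mem_filter.mpr ⟨Finset.mem_filter.mpr ⟨mem_univ _, hf.2, hT.1, hT.2⟩, rfl⟩, rfl⟩
  have hL : P.card = ∑ r ∈ Finset.range (l + 1), cycA l k r * r.choose s := by
    rw [Finset.card_eq_sum_card_fiberwise hmaps1, Finset.sum_congr rfl hfib1]
    have hmaps2 : ∀ f ∈ t, (descs f).card ∈ Finset.range (l + 1) := by
      intro f _
      rw [Finset.mem_range]
      have := Finset.card_le_card (Finset.subset_univ (descs f))
      simp only [Finset.card_univ, Fintype.card_fin] at this
      omega
    rw [← Finset.sum_fiberwise_of_maps_to hmaps2 (fun f => (descs f).card.choose s)]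
    apply Finset.sum_congr rfl
    intro r _
    have : ∑ f ∈ t.filter (fun f => (descs f).card = r), (descs f).card.choose s
        = ∑ f ∈ t.filter (fun f => (descs f).card = r), r.choose s := by
      apply Finset.sum_congr rfl
      intro f hf
      rw [mem_filter] at hf
      rw [hf.2]
    rw [this, Finset.sum_const, smul_eq_mul, cycA_eq, ht, Finset.filter_filter]
  -- RHS = P.card
  set Bfin : Finset (Finset (Fin l)) :=
    univ.filter (fun S => S.card = s ∧ ∀ i ∈ S, cyc i ∉ S) with hBfin
  have hB : cycB l s = Bfin.card := by
    rw [cycB_eq, hBfin, ← card_funs (fun S => S.card = s ∧ ∀ i ∈ S, cyc i ∉ S)]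
    congr 1
    apply Finset.filter_congr
    intro f _
    constructor
    · rintro ⟨h1, h2⟩
      refine ⟨h1, fun i hi hci => ?_⟩
      have := h2 i (mem_ones.mp hi)
      rw [mem_ones] at hci
      simp [this] at hci
    · rintro ⟨h1, h2⟩
      refine ⟨h1, fun i hi => ?_⟩
      have := h2 i (mem_ones.mpr hi)
      rw [mem_ones] at this
      cases hc : f (cyc i)
      · rfl
      · exact absurd hc this
  have hmaps3 : ∀ p ∈ P, p.2 ∈ Bfin := by
    intro p hp
    rw [hP, mem_filter] at hp
    obtain ⟨_, _, h2, h3⟩ := hp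
    rw [hBfin, mem_filter]
    refine ⟨mem_univ _, h3, fun i hi hci => ?_⟩
    have hd1 := mem_descs.mp (h2 hi)
    have hd2 := mem_descs.mp (h2 hci)
    rw [hd1.2] at hd2
    exact absurd hd2.1 (by simp)
  have hR : P.card = cycB l s * (l - 2 * s).choose (k - s) := by
    rw [Finset.card_eq_sum_card_fiberwise hmaps3, hB]
    have hconst : ∀ S ∈ Bfin, (P.filter (fun p => p.2 = S)).card = (l - 2 * s).choose (k - s) := by
      intro S hS
      rw [hBfin, mem_filter] at hS
      obtain ⟨_, hc, hi⟩ := hS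
      rw [← fiber_card hsk S hc hi]
      apply Finset.card_bij (fun p _ => p.1)
      · intro p hp
        simp only [hP, mem_filter, mem_univ, true_and] at hp
        obtain ⟨⟨h1, h2, _⟩, h4⟩ := hp
        simp only [mem_filter, mem_univ, true_and]
        exact ⟨h1, h4 ▸ h2⟩
      · intro p hp q hq h
        simp only [mem_filter] at hp hq
        exact Prod.ext h (hp.2.trans hq.2.symm)
      · intro f hf
        simp only [mem_filter, mem_univ, true_and] at hf
        exact ⟨(f, S), Finset.mem_filter.mpr ⟨Finset.mem_filter.mpr ⟨mem_univ _, hf.1, hf.2, hc⟩, rfl⟩, rfl⟩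
    rw [Finset.sum_congr rfl hconst, Finset.sum_const, smul_eq_mul]
  rw [hL.symm, hR]
end

section
/- For all natural numbers l ≥ 1 and s, the identity 2^{l-2s} · b_{l,s} = 2 · ∑_i C(l, 2i) · C(i, s) holds, where b_{l,s} is the number of cyclic binary sequences of length l with exactly s ones, no two of which are cyclically consecutive (for 2s > l, b_{l,s} = 0). -/
def onesCard {n : ℕ} (f : Fin n → Bool) : ℕ := (Finset.univ.filter (fun i => f i = true)).card

def linB (m s : ℕ) : ℕ :=
  (Finset.univ.filter (fun f : Fin m → Bool =>
    onesCard f = s ∧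
    ∀ i : Fin m, ∀ h : i.val + 1 < m, f i = true → f ⟨i.val + 1, h⟩ = false)).card

lemma card_split {α : Type*} [DecidableEq α] (s : Finset α) (p : α → Prop) [DecidablePred p]
    (b : α → Bool) :
    (s.filter p).card = (s.filter fun a => p a ∧ b a = false).card
      + (s.filter fun a => p a ∧ b a = true).card := by
  classical
  have h := Finset.card_filter_add_card_filter_not
    (s := s.filter p) (p := fun a => b a = false)
  rw [Finset.filter_filter, Finset.filter_filter] at h
  rw [← h]
  congr 1
  congr 1
  apply Finset.filter_congr
  intro a _
  simp only [Bool.not_eq_false]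

lemma snoc_mk_lt {n : ℕ} (g : Fin n → Bool) (b : Bool) (v : ℕ) (h : v < n + 1) (h2 : v < n) :
    (Fin.snoc g b : Fin (n+1) → Bool) ⟨v, h⟩ = g ⟨v, h2⟩ := by
  have e : (⟨v, h⟩ : Fin (n+1)) = Fin.castSucc ⟨v, h2⟩ := rfl
  rw [e, Fin.snoc_castSucc]

lemma snoc_mk_eq {n : ℕ} (g : Fin n → Bool) (b : Bool) (v : ℕ) (h : v < n + 1) (h2 : v = n) :
    (Fin.snoc g b : Fin (n+1) → Bool) ⟨v, h⟩ = b := by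
  subst h2
  have e : (⟨v, h⟩ : Fin (v+1)) = Fin.last v := rfl
  rw [e, Fin.snoc_last]

-- counting helpers
lemma onesCard_le {n : ℕ} (f : Fin n → Bool) : onesCard f ≤ n := by
  classical
  calc onesCard f ≤ (Finset.univ : Finset (Fin n)).card := Finset.card_filter_le _ _
  _ = n := by simp

lemma onesCard_castSucc {n : ℕ} (f : Fin (n+1) → Bool) :
    onesCard f = onesCard (f ∘ Fin.castSucc) + (if f (Fin.last n) = true then 1 else 0) := by
  classical
  unfold onesCard
  rw [Finset.card_filter, Finset.card_filter, Fin.sum_univ_castSucc]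
  rfl

lemma onesCard_succ {n : ℕ} (f : Fin (n+1) → Bool) :
    onesCard f = (if f 0 = true then 1 else 0) + onesCard (f ∘ Fin.succ) := by
  classical
  unfold onesCard
  rw [Finset.card_filter, Finset.card_filter, Fin.sum_univ_succ]
  rfl

lemma onesCard_snoc {n : ℕ} (g : Fin n → Bool) (b : Bool) :
    onesCard (Fin.snoc g b) = onesCard g + (if b = true then 1 else 0) := by
  rw [onesCard_castSucc (Fin.snoc g b)]
  congr 1
  · congr 1
    funext j
    rw [Function.comp_apply, Fin.snoc_castSucc]
  · rw [Fin.snoc_last]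

-- linB facts
lemma linB_zero_of_lt {m s : ℕ} (h : m < s) : linB m s = 0 := by
  classical
  unfold linB
  rw [Finset.card_eq_zero, Finset.filter_eq_empty_iff]
  rintro f - ⟨hc, -⟩
  have := onesCard_le f
  omega

lemma linB_zero_right (m : ℕ) : linB m 0 = 1 := by
  classical
  unfold linB onesCard
  rw [Finset.card_eq_one]
  refine ⟨fun _ => false, ?_⟩
  ext f
  simp only [Finset.mem_filter, Finset.mem_univ, true_and, Finset.mem_singleton,
    Finset.card_eq_zero, Finset.filter_eq_empty_iff]
  constructor
  · rintro ⟨h1, -⟩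
    funext i
    simpa using @h1 i trivial
  · rintro rfl
    simp

lemma linB_aux_false (m s : ℕ) : (Finset.univ.filter fun f : Fin (m+2) → Bool =>
      (onesCard f = s+1 ∧ ∀ i : Fin (m+2), ∀ h : i.val + 1 < m+2,
        f i = true → f ⟨i.val + 1, h⟩ = false)
      ∧ f (Fin.last (m+1)) = false).card = linB (m+1) (s+1) := by
  classical
  unfold linB
  apply Finset.card_nbij' (i := fun f (j : Fin (m+1)) => f (Fin.castSucc j))
    (j := fun g => (Fin.snoc g false : Fin (m+2) → Bool))
  · intro f hf
    simp only [Finset.mem_coe, Finset.mem_filter, Finset.mem_univ, true_and] at hf ⊢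
    obtain ⟨⟨hc, hv⟩, hlast⟩ := hf
    constructor
    · have hoc := onesCard_castSucc f
      rw [hlast] at hoc
      simp only [if_neg (by simp : ¬(false = true))] at hoc
      show onesCard (f ∘ Fin.castSucc) = s + 1
      omega
    · intro i h hi
      have h2 : (Fin.castSucc i).val + 1 < m+2 := by
        simp only [Fin.coe_castSucc]; omega
      have hres := hv (Fin.castSucc i) h2 hi
      have e : Fin.castSucc (⟨i.val + 1, h⟩ : Fin (m+1))
          = (⟨(Fin.castSucc i).val + 1, h2⟩ : Fin (m+2)) := rfl
      show f (Fin.castSucc ⟨i.val + 1, h⟩) = false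
      rw [e]; exact hres
  · intro g hg
    simp only [Finset.mem_coe, Finset.mem_filter, Finset.mem_univ, true_and] at hg ⊢
    obtain ⟨hc, hv⟩ := hg
    refine ⟨⟨?_, ?_⟩, ?_⟩
    · rw [onesCard_snoc]
      simp only [if_neg (by simp : ¬(false = true))]
      omega
    · intro i h hi
      rcases Nat.lt_or_ge (i.val + 1) (m+1) with hlt | hge
      · have hival : i.val < m + 1 := by omega
        have e1 : (Fin.snoc g false : Fin (m+2) → Bool) i = g ⟨i.val, hival⟩ :=
          snoc_mk_lt g false i.val i.isLt hival
        rw [e1] at hi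
        rw [snoc_mk_lt g false (i.val+1) h hlt]
        exact hv ⟨i.val, hival⟩ (by simpa using hlt) hi
      · have hieq : i.val + 1 = m + 1 := by omega
        rw [snoc_mk_eq g false (i.val+1) h hieq]
    · have e : Fin.last (m+1) = (⟨m+1, by omega⟩ : Fin (m+2)) := rfl
      rw [e, snoc_mk_eq g false (m+1) (by omega) rfl]
  · intro f hf
    simp only [Finset.mem_coe, Finset.mem_filter, Finset.mem_univ, true_and] at hf
    obtain ⟨-, hlast⟩ := hf
    funext x
    dsimp only
    induction x using Fin.lastCases with
    | last => rw [Fin.snoc_last, hlast]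
    | cast j => rw [Fin.snoc_castSucc]
  · intro g hg
    funext j
    exact Fin.snoc_castSucc _ _ _

lemma linB_aux_true (m s : ℕ) : (Finset.univ.filter fun f : Fin (m+2) → Bool =>
      (onesCard f = s+1 ∧ ∀ i : Fin (m+2), ∀ h : i.val + 1 < m+2,
        f i = true → f ⟨i.val + 1, h⟩ = false)
      ∧ f (Fin.last (m+1)) = true).card = linB m s := by
  classical
  unfold linB
  apply Finset.card_nbij' (i := fun f (j : Fin m) => f (Fin.castSucc (Fin.castSucc j)))
    (j := fun g => (Fin.snoc (Fin.snoc g false) true : Fin (m+2) → Bool))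
  · intro f hf
    simp only [Finset.mem_coe, Finset.mem_filter, Finset.mem_univ, true_and] at hf ⊢
    obtain ⟨⟨hc, hv⟩, hlast⟩ := hf
    have hm : f (Fin.castSucc (Fin.last m)) = false := by
      by_contra hcon
      have hcon' : f (Fin.castSucc (Fin.last m)) = true := by
        simpa using hcon
      have h2 : (Fin.castSucc (Fin.last m)).val + 1 < m + 2 := by
        simp only [Fin.coe_castSucc, Fin.val_last]; omega
      have hres := hv _ h2 hcon'
      have e : (⟨(Fin.castSucc (Fin.last m)).val + 1, h2⟩ : Fin (m+2)) = Fin.last (m+1) := by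
        apply Fin.ext; simp
      rw [e, hlast] at hres
      cases hres
    constructor
    · have h1 := onesCard_castSucc f
      have h2 := onesCard_castSucc (f ∘ Fin.castSucc)
      rw [hlast] at h1
      have e2 : (f ∘ Fin.castSucc) (Fin.last m) = false := hm
      rw [e2] at h2
      simp only [if_neg (by simp : ¬(false = true)), eq_self_iff_true, if_true] at h1 h2
      show onesCard ((f ∘ Fin.castSucc) ∘ Fin.castSucc) = s
      omega
    · intro i h hi
      have h2 : (Fin.castSucc (Fin.castSucc i)).val + 1 < m+2 := by
        simp only [Fin.coe_castSucc]; omega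
      have hres := hv (Fin.castSucc (Fin.castSucc i)) h2 hi
      have e : Fin.castSucc (Fin.castSucc (⟨i.val + 1, h⟩ : Fin m))
          = (⟨(Fin.castSucc (Fin.castSucc i)).val + 1, h2⟩ : Fin (m+2)) := rfl
      show f (Fin.castSucc (Fin.castSucc ⟨i.val + 1, h⟩)) = false
      rw [e]; exact hres
  · intro g hg
    simp only [Finset.mem_coe, Finset.mem_filter, Finset.mem_univ, true_and] at hg ⊢
    obtain ⟨hc, hv⟩ := hg
    refine ⟨⟨?_, ?_⟩, ?_⟩
    · rw [onesCard_snoc, onesCard_snoc]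
      simp only [if_neg (by simp : ¬(false = true)), eq_self_iff_true, if_true]
      omega
    · intro i h hi
      rcases Nat.lt_or_ge (i.val + 1) m with hlt | hge
      · have hival : i.val < m := by omega
        have e1 : (Fin.snoc (Fin.snoc g false) true : Fin (m+2) → Bool) i
            = g ⟨i.val, hival⟩ :=
          (snoc_mk_lt (Fin.snoc g false) true i.val i.isLt (by omega)).trans
            (snoc_mk_lt g false i.val (by omega) hival)
        rw [e1] at hi
        rw [snoc_mk_lt (Fin.snoc g false) true (i.val+1) h (by omega),
          snoc_mk_lt g false (i.val+1) (by omega) hlt]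
        exact hv ⟨i.val, hival⟩ (by simpa using hlt) hi
      · rcases Nat.lt_or_ge (i.val + 1) (m+1) with hlt1 | hge1
        · have hieq : i.val + 1 = m := by omega
          rw [snoc_mk_lt (Fin.snoc g false) true (i.val+1) h hlt1,
            snoc_mk_eq g false (i.val+1) hlt1 hieq]
        · have him : i.val = m := by omega
          have e1 : (Fin.snoc (Fin.snoc g false) true : Fin (m+2) → Bool) i = false :=
            (snoc_mk_lt (Fin.snoc g false) true i.val i.isLt (by omega)).trans
              (snoc_mk_eq g false i.val (by omega) him)
          rw [e1] at hi
          cases hi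
    · have e : Fin.last (m+1) = (⟨m+1, by omega⟩ : Fin (m+2)) := rfl
      rw [e, snoc_mk_eq (Fin.snoc g false) true (m+1) (by omega) rfl]
  · intro f hf
    simp only [Finset.mem_coe, Finset.mem_filter, Finset.mem_univ, true_and] at hf
    obtain ⟨⟨hc, hv⟩, hlast⟩ := hf
    have hm : f (Fin.castSucc (Fin.last m)) = false := by
      by_contra hcon
      have hcon' : f (Fin.castSucc (Fin.last m)) = true := by
        simpa using hcon
      have h2 : (Fin.castSucc (Fin.last m)).val + 1 < m + 2 := by
        simp only [Fin.coe_castSucc, Fin.val_last]; omega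
      have hres := hv _ h2 hcon'
      have e : (⟨(Fin.castSucc (Fin.last m)).val + 1, h2⟩ : Fin (m+2)) = Fin.last (m+1) := by
        apply Fin.ext; simp
      rw [e, hlast] at hres
      cases hres
    funext x
    dsimp only
    induction x using Fin.lastCases with
    | last => rw [Fin.snoc_last, hlast]
    | cast j =>
      rw [Fin.snoc_castSucc]
      induction j using Fin.lastCases with
      | last => rw [Fin.snoc_last, hm]
      | cast j2 => rw [Fin.snoc_castSucc]
  · intro g hg
    funext j
    dsimp only
    rw [Fin.snoc_castSucc, Fin.snoc_castSucc]

lemma linB_rec (m s : ℕ) : linB (m+2) (s+1) = linB (m+1) (s+1) + linB m s := by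
  classical
  have hsplit := card_split (Finset.univ : Finset (Fin (m+2) → Bool))
    (fun f => onesCard f = s+1 ∧
      ∀ i : Fin (m+2), ∀ h : i.val + 1 < m+2, f i = true → f ⟨i.val + 1, h⟩ = false)
    (fun f => f (Fin.last (m+1)))
  rw [linB, hsplit, linB_aux_false, linB_aux_true]

lemma linB_eq : ∀ m s, linB m s = (m + 1 - s).choose s := by
  intro m
  induction m using Nat.strong_induction_on with
  | _ m ih =>
    rcases m with _ | _ | m
    · intro s
      rcases s with _ | _ | t
      · decide
      · decide
      · rw [linB_zero_of_lt (by omega), show 0+1-(t+2) = 0 from by omega,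
          Nat.choose_eq_zero_of_lt (by omega)]
    · intro s
      rcases s with _ | _ | t
      · decide
      · decide
      · rw [linB_zero_of_lt (by omega), show 1+1-(t+2) = 0 from by omega,
          Nat.choose_eq_zero_of_lt (by omega)]
    · intro s
      rcases s with _ | t
      · rw [linB_zero_right, Nat.choose_zero_right]
      · have hrec : linB (m+1+1) (t+1) = linB (m+1) (t+1) + linB m t := linB_rec m t
        rw [hrec, ih (m+1) (by omega) (t+1), ih m (by omega) t]
        rcases Nat.lt_or_ge (m+1) t with hlt | hge
        · rw [show m+1+1-(t+1) = 0 from by omega, show m+1-t = 0 from by omega,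
            show m+1+1+1-(t+1) = 0 from by omega,
            Nat.choose_eq_zero_of_lt (by omega : 0 < t+1),
            Nat.choose_eq_zero_of_lt (by omega : 0 < t)]
        · obtain ⟨u, hu⟩ : ∃ u, m + 1 - t = u := ⟨_, rfl⟩
          rw [show m+1+1-(t+1) = u from by omega, show m+1-t = u from by omega,
            show m+1+1+1-(t+1) = u+1 from by omega, Nat.choose_succ_succ' u t]
          omega

-- cycB facts
lemma cycB_zero_right (l : ℕ) : cycB l 0 = 1 := by
  classical
  unfold cycB
  rw [Finset.card_eq_one]
  refine ⟨fun _ => false, ?_⟩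
  ext f
  simp only [Finset.mem_filter, Finset.mem_univ, true_and, Finset.mem_singleton,
    Finset.card_eq_zero, Finset.filter_eq_empty_iff]
  constructor
  · rintro ⟨h1, -⟩
    funext i
    simpa using @h1 i trivial
  · rintro rfl
    simp

lemma cycB_one (s : ℕ) : cycB 1 (s+1) = 0 := by
  classical
  unfold cycB
  rw [Finset.card_eq_zero, Finset.filter_eq_empty_iff]
  rintro f - ⟨hc, hv⟩
  by_cases h : f 0 = true
  · have := hv 0 h
    have e : cyc (0 : Fin 1) = 0 := by ext; simp [cyc]
    rw [e] at this
    rw [h] at this; cases this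
  · have : (Finset.univ.filter (fun i => f i = true)) = ∅ := by
      rw [Finset.filter_eq_empty_iff]
      intro i _
      have hi : i = 0 := Subsingleton.elim i 0
      rw [hi]; simpa using h
    rw [this] at hc
    simp at hc

lemma cyc_val_lt {n v : ℕ} (h : v < n) (h2 : v + 1 < n) : (cyc ⟨v, h⟩ : Fin n) = ⟨v+1, h2⟩ := by
  apply Fin.ext
  show (v + 1) % n = v + 1
  exact Nat.mod_eq_of_lt h2

lemma cyc_val_top {n v : ℕ} (h : v < n) (h2 : v + 1 = n) : (cyc ⟨v, h⟩ : Fin n) = ⟨0, by omega⟩ := by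
  apply Fin.ext
  show (v + 1) % n = 0
  rw [h2, Nat.mod_self]

lemma onesCard_shift (m : ℕ) (F : Fin (m+3) → Bool)
    (h0 : F ⟨0, by omega⟩ = false) (h1 : F ⟨m+1, by omega⟩ = false)
    (h2 : F ⟨m+2, by omega⟩ = true) :
    onesCard F = onesCard (fun j : Fin m => F ⟨j.val+1, by omega⟩) + 1 := by
  have e1 := onesCard_castSucc F
  have e2 := onesCard_castSucc (F ∘ Fin.castSucc)
  have e3 := onesCard_succ ((F ∘ Fin.castSucc) ∘ Fin.castSucc)
  have v1 : F (Fin.last (m+2)) = true := h2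
  have v2 : (F ∘ Fin.castSucc) (Fin.last (m+1)) = false := h1
  have v3 : ((F ∘ Fin.castSucc) ∘ Fin.castSucc) 0 = false := h0
  have v4 : (((F ∘ Fin.castSucc) ∘ Fin.castSucc) ∘ Fin.succ)
      = fun j : Fin m => F ⟨j.val+1, by omega⟩ := rfl
  rw [v1] at e1
  rw [v2] at e2
  rw [v3, v4] at e3
  simp only [eq_self_iff_true, if_true, if_neg (by simp : ¬(false = true))] at e1 e2 e3
  omega

lemma cycB_aux_false (m s : ℕ) :
    (Finset.univ.filter fun f : Fin (m+3) → Bool =>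
      (onesCard f = s ∧ ∀ i : Fin (m+3), f i = true → f (cyc i) = false)
      ∧ f (Fin.last (m+2)) = false).card = linB (m+2) s := by
  classical
  unfold linB
  apply Finset.card_nbij' (i := fun f (j : Fin (m+2)) => f (Fin.castSucc j))
    (j := fun g => (Fin.snoc g false : Fin (m+3) → Bool))
  · intro f hf
    simp only [Finset.mem_coe, Finset.mem_filter, Finset.mem_univ, true_and] at hf ⊢
    obtain ⟨⟨hc, hv⟩, hlast⟩ := hf
    constructor
    · have hoc := onesCard_castSucc f
      rw [hlast] at hoc
      simp only [if_neg (by simp : ¬(false = true))] at hoc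
      show onesCard (f ∘ Fin.castSucc) = s
      omega
    · intro j h hj
      have e : f (cyc (Fin.castSucc j)) = false := hv _ hj
      have e2 : cyc (Fin.castSucc j) = Fin.castSucc (⟨j.val + 1, h⟩ : Fin (m+2)) := by
        apply Fin.ext
        show (j.val + 1) % (m+3) = j.val + 1
        exact Nat.mod_eq_of_lt (by omega)
      rw [← e2]
      exact e
  · intro g hg
    simp only [Finset.mem_coe, Finset.mem_filter, Finset.mem_univ, true_and] at hg ⊢
    obtain ⟨hc, hv⟩ := hg
    refine ⟨⟨?_, ?_⟩, ?_⟩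
    · rw [onesCard_snoc]
      simp only [if_neg (by simp : ¬(false = true))]
      omega
    · intro i hi
      rcases Nat.lt_or_ge (i.val + 1) (m+3) with hin | hout
      · have ecyc : cyc i = (⟨i.val + 1, hin⟩ : Fin (m+3)) := cyc_val_lt i.isLt hin
        rcases Nat.lt_or_ge i.val (m+2) with hilt | hige
        · have e1 : (Fin.snoc g false : Fin (m+3) → Bool) i = g ⟨i.val, hilt⟩ :=
            snoc_mk_lt g false i.val i.isLt hilt
          rw [e1] at hi
          rcases Nat.lt_or_ge (i.val + 1) (m+2) with hlt2 | hge2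
          · rw [ecyc, snoc_mk_lt g false (i.val+1) hin hlt2]
            exact hv ⟨i.val, hilt⟩ (by simpa using hlt2) hi
          · rw [ecyc, snoc_mk_eq g false (i.val+1) hin (by omega)]
        · have e1 : (Fin.snoc g false : Fin (m+3) → Bool) i = false :=
            snoc_mk_eq g false i.val i.isLt (by omega)
          rw [e1] at hi
          cases hi
      · have e1 : (Fin.snoc g false : Fin (m+3) → Bool) i = false :=
          snoc_mk_eq g false i.val i.isLt (by omega)
        rw [e1] at hi
        cases hi
    · have e : Fin.last (m+2) = (⟨m+2, by omega⟩ : Fin (m+3)) := rfl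
      rw [e, snoc_mk_eq g false (m+2) (by omega) rfl]
  · intro f hf
    simp only [Finset.mem_coe, Finset.mem_filter, Finset.mem_univ, true_and] at hf
    obtain ⟨-, hlast⟩ := hf
    funext x
    dsimp only
    induction x using Fin.lastCases with
    | last => rw [Fin.snoc_last, hlast]
    | cast j => rw [Fin.snoc_castSucc]
  · intro g hg
    funext j
    exact Fin.snoc_castSucc _ _ _

lemma cycB_aux_true (m s : ℕ) :
    (Finset.univ.filter fun f : Fin (m+3) → Bool =>
      (onesCard f = s + 1 ∧ ∀ i : Fin (m+3), f i = true → f (cyc i) = false)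
      ∧ f (Fin.last (m+2)) = true).card = linB m s := by
  classical
  unfold linB
  apply Finset.card_nbij' (i := fun f (j : Fin m) => f ⟨j.val + 1, by omega⟩)
    (j := fun g (i : Fin (m+3)) =>
      if h : 1 ≤ i.val ∧ i.val < m + 1 then g ⟨i.val - 1, by omega⟩
      else decide (i.val = m + 2))
  · intro f hf
    simp only [Finset.mem_coe, Finset.mem_filter, Finset.mem_univ, true_and] at hf ⊢
    obtain ⟨⟨hc, hv⟩, hlast⟩ := hf
    have hlast' : f ⟨m+2, by omega⟩ = true := hlast
    have h0 : f ⟨0, by omega⟩ = false := by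
      have e := hv ⟨m+2, by omega⟩ hlast'
      rwa [cyc_val_top (by omega) (by omega)] at e
    have hm1 : f ⟨m+1, by omega⟩ = false := by
      by_contra hcon
      have hcon' : f ⟨m+1, by omega⟩ = true := by simpa using hcon
      have e := hv ⟨m+1, by omega⟩ hcon'
      rw [cyc_val_lt (by omega) (by omega)] at e
      rw [e] at hlast'
      cases hlast'
    constructor
    · have := onesCard_shift m f h0 hm1 hlast'
      omega
    · intro j h hj
      have e := hv ⟨j.val + 1, by omega⟩ hj
      rwa [cyc_val_lt (by omega) (by omega : j.val + 1 + 1 < m + 3)] at e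
  · intro g hg
    simp only [Finset.mem_coe, Finset.mem_filter, Finset.mem_univ, true_and] at hg ⊢
    obtain ⟨hc, hv⟩ := hg
    have ej : ∀ (v : ℕ) (hvm : v < m),
        (if h : 1 ≤ v + 1 ∧ v + 1 < m + 1 then g ⟨v + 1 - 1, by omega⟩
          else decide (v + 1 = m + 2)) = g ⟨v, hvm⟩ := by
      intro v hvm
      rw [dif_pos ⟨by omega, by omega⟩]
      congr 1
    have e0 : (if h : 1 ≤ (0:ℕ) ∧ (0:ℕ) < m + 1 then g ⟨0 - 1, by omega⟩
        else decide ((0:ℕ) = m + 2)) = false := by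
      rw [dif_neg (by omega)]
      simp only [decide_eq_false_iff_not]
      omega
    have em1 : (if h : 1 ≤ m + 1 ∧ m + 1 < m + 1 then g ⟨m + 1 - 1, by omega⟩
        else decide (m + 1 = m + 2)) = false := by
      rw [dif_neg (by omega)]
      simp only [decide_eq_false_iff_not]
      omega
    have em2 : (if h : 1 ≤ m + 2 ∧ m + 2 < m + 1 then g ⟨m + 2 - 1, by omega⟩
        else decide (m + 2 = m + 2)) = true := by
      rw [dif_neg (by omega)]
      simp
    refine ⟨⟨?_, ?_⟩, ?_⟩
    · have hsh := onesCard_shift m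
        (fun i : Fin (m+3) =>
          if h : 1 ≤ i.val ∧ i.val < m + 1 then g ⟨i.val - 1, by omega⟩
          else decide (i.val = m + 2)) e0 em1 em2
      have hfun : (fun j : Fin m =>
          if h : 1 ≤ (j.val + 1) ∧ (j.val + 1) < m + 1 then g ⟨j.val + 1 - 1, by omega⟩
          else decide (j.val + 1 = m + 2)) = g := by
        funext j
        exact ej j.val j.isLt
      rw [hfun] at hsh
      omega
    · intro i hi
      rcases Nat.lt_or_ge i.val 1 with hv0 | hv1
      · have hz : i.val = 0 := by omega
        have e1 : (if h : 1 ≤ i.val ∧ i.val < m + 1 then g ⟨i.val - 1, by omega⟩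
            else decide (i.val = m + 2)) = false := by
          rw [dif_neg (by omega)]
          simp only [decide_eq_false_iff_not]
          omega
        rw [e1] at hi
        cases hi
      · rcases Nat.lt_or_ge i.val (m+1) with hvlt | hvge
        · have e1 : (if h : 1 ≤ i.val ∧ i.val < m + 1 then g ⟨i.val - 1, by omega⟩
              else decide (i.val = m + 2)) = g ⟨i.val - 1, by omega⟩ :=
            dif_pos ⟨hv1, hvlt⟩
          rw [e1] at hi
          have ecyc : cyc i = (⟨i.val + 1, by omega⟩ : Fin (m+3)) :=
            cyc_val_lt i.isLt (by omega)
          rw [ecyc]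
          show (if h : 1 ≤ i.val + 1 ∧ i.val + 1 < m + 1 then g ⟨i.val + 1 - 1, by omega⟩
            else decide (i.val + 1 = m + 2)) = false
          rcases Nat.lt_or_ge (i.val + 1) (m+1) with hlt2 | hge2
          · rw [dif_pos ⟨by omega, hlt2⟩]
            have := hv ⟨i.val - 1, by omega⟩ (by omega : i.val - 1 + 1 < m) hi
            have eidx : (⟨i.val - 1 + 1, by omega⟩ : Fin m) = ⟨i.val + 1 - 1, by omega⟩ := by
              apply Fin.ext
              show i.val - 1 + 1 = i.val + 1 - 1
              omega
            rwa [eidx] at this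
          · rw [dif_neg (by omega)]
            simp only [decide_eq_false_iff_not]
            omega
        · rcases Nat.lt_or_ge i.val (m+2) with hvlt2 | hvge2
          · have e1 : (if h : 1 ≤ i.val ∧ i.val < m + 1 then g ⟨i.val - 1, by omega⟩
                else decide (i.val = m + 2)) = false := by
              rw [dif_neg (by omega)]
              simp only [decide_eq_false_iff_not]
              omega
            rw [e1] at hi
            cases hi
          · have hz : i.val = m + 2 := by omega
            have ecyc : cyc i = (⟨0, by omega⟩ : Fin (m+3)) :=
              cyc_val_top i.isLt (by omega)
            rw [ecyc]
            show (if h : 1 ≤ (0:ℕ) ∧ (0:ℕ) < m + 1 then g ⟨0 - 1, by omega⟩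
              else decide ((0:ℕ) = m + 2)) = false
            exact e0
    · show (if h : 1 ≤ m + 2 ∧ m + 2 < m + 1 then g ⟨m + 2 - 1, by omega⟩
        else decide (m + 2 = m + 2)) = true
      exact em2
  · intro f hf
    simp only [Finset.mem_coe, Finset.mem_filter, Finset.mem_univ, true_and] at hf
    obtain ⟨⟨hc, hv⟩, hlast⟩ := hf
    have hlast' : f ⟨m+2, by omega⟩ = true := hlast
    have h0 : f ⟨0, by omega⟩ = false := by
      have e := hv ⟨m+2, by omega⟩ hlast'
      rwa [cyc_val_top (by omega) (by omega)] at e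
    have hm1 : f ⟨m+1, by omega⟩ = false := by
      by_contra hcon
      have hcon' : f ⟨m+1, by omega⟩ = true := by simpa using hcon
      have e := hv ⟨m+1, by omega⟩ hcon'
      rw [cyc_val_lt (by omega) (by omega)] at e
      rw [e] at hlast'
      cases hlast'
    funext x
    show (if h : 1 ≤ x.val ∧ x.val < m + 1 then f ⟨x.val - 1 + 1, by omega⟩
      else decide (x.val = m + 2)) = f x
    rcases Nat.lt_or_ge x.val 1 with hv0 | hv1
    · rw [dif_neg (by omega)]
      have hfx : f x = false := by
        have hz : x = (⟨0, by omega⟩ : Fin (m+3)) := by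
          apply Fin.ext; show x.val = 0; omega
        rw [hz]; exact h0
      rw [hfx]
      simp only [decide_eq_false_iff_not]
      omega
    · rcases Nat.lt_or_ge x.val (m+1) with hvlt | hvge
      · rw [dif_pos ⟨hv1, hvlt⟩]
        congr 1
        apply Fin.ext
        show x.val - 1 + 1 = x.val
        omega
      · rcases Nat.lt_or_ge x.val (m+2) with hvlt2 | hvge2
        · rw [dif_neg (by omega)]
          have hfx : f x = false := by
            have hz : x = (⟨m+1, by omega⟩ : Fin (m+3)) := by
              apply Fin.ext; show x.val = m+1; omega
            rw [hz]; exact hm1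
          rw [hfx]
          simp only [decide_eq_false_iff_not]
          omega
        · rw [dif_neg (by omega)]
          have hfx : f x = true := by
            have hz : x = (⟨m+2, by omega⟩ : Fin (m+3)) := by
              apply Fin.ext; show x.val = m+2; omega
            rw [hz]; exact hlast'
          rw [hfx]
          simp only [decide_eq_true_eq]
          omega
  · intro g hg
    funext j
    show (if h : 1 ≤ j.val + 1 ∧ j.val + 1 < m + 1 then g ⟨j.val + 1 - 1, by omega⟩
      else decide (j.val + 1 = m + 2)) = g j
    rw [dif_pos ⟨by omega, by omega⟩]
    exact congrArg g (Fin.ext (by omega : j.val + 1 - 1 = j.val))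

lemma cycB_split (m s : ℕ) : cycB (m+3) (s+1) = linB (m+2) (s+1) + linB m s := by
  classical
  have e0 : cycB (m+3) (s+1) = (Finset.univ.filter fun f : Fin (m+3) → Bool =>
      onesCard f = s+1 ∧ ∀ i : Fin (m+3), f i = true → f (cyc i) = false).card := rfl
  have hsplit := card_split (Finset.univ : Finset (Fin (m+3) → Bool))
    (fun f => onesCard f = s+1 ∧ ∀ i : Fin (m+3), f i = true → f (cyc i) = false)
    (fun f => f (Fin.last (m+2)))
  rw [e0, hsplit, cycB_aux_false, cycB_aux_true]

lemma cycB_two (s : ℕ) : cycB 2 (s+2) = 0 := by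
  rcases s with _ | t
  · decide
  · apply Nat.eq_zero_of_le_zero
    unfold cycB
    rw [Nat.le_zero, Finset.card_eq_zero, Finset.filter_eq_empty_iff]
    rintro f - ⟨hc, -⟩
    have h1 : (Finset.univ.filter (fun i => f i = true)).card ≤ 2 := by
      calc (Finset.univ.filter (fun i => f i = true)).card
          ≤ (Finset.univ : Finset (Fin 2)).card := Finset.card_filter_le _ _
        _ = 2 := by simp
    omega

lemma cycB_CF {l s : ℕ} (hl : 2 ≤ l) (hs : 1 ≤ s) :
    cycB l s = (l - s).choose s + (l - s - 1).choose (s - 1) := by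
  rcases l with _ | _ | _ | m
  · omega
  · omega
  · rcases s with _ | _ | t
    · omega
    · decide
    · rw [cycB_two t, show 2-(t+2) = 0 from by omega, show (0:ℕ)-1 = 0 from rfl,
        Nat.choose_eq_zero_of_lt (by omega : 0 < t+2),
        Nat.choose_eq_zero_of_lt (by omega : 0 < t+2-1)]
  · rcases s with _ | t
    · omega
    · have e1 : cycB (m+1+1+1) (t+1) = cycB (m+3) (t+1) := rfl
      rw [e1, cycB_split m t, linB_eq, linB_eq]
      congr 2 <;> omega

-- RHS sums
def Esum (l s : ℕ) : ℕ := ∑ i ∈ Finset.range (l + 1), l.choose (2 * i) * i.choose s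
def Osum (l s : ℕ) : ℕ := ∑ i ∈ Finset.range (l + 1), l.choose (2 * i + 1) * (i+1).choose s

lemma Esum_ext (l s N : ℕ) (h : l + 1 ≤ N) :
    ∑ i ∈ Finset.range N, l.choose (2 * i) * i.choose s = Esum l s := by
  unfold Esum
  rw [← Finset.sum_subset (Finset.range_subset_range.2 h)]
  intro i hi hni
  simp only [Finset.mem_range] at hi hni
  have : l < 2 * i := by omega
  rw [Nat.choose_eq_zero_of_lt this, zero_mul]

lemma Osum_ext (l s N : ℕ) (h : l + 1 ≤ N) :
    ∑ i ∈ Finset.range N, l.choose (2 * i + 1) * (i+1).choose s = Osum l s := by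
  unfold Osum
  rw [← Finset.sum_subset (Finset.range_subset_range.2 h)]
  intro i hi hni
  simp only [Finset.mem_range] at hi hni
  have : l < 2 * i + 1 := by omega
  rw [Nat.choose_eq_zero_of_lt this, zero_mul]

lemma Esum_succ (l s : ℕ) : Esum (l+1) s = Esum l s + Osum l s := by
  have e0 : Esum (l+1) s = ∑ i ∈ Finset.range (l+1+1), (l+1).choose (2*i) * i.choose s := rfl
  rw [e0, Finset.sum_range_succ']
  have key : ∀ i, (l+1).choose (2*(i+1)) * (i+1).choose s
      = l.choose (2*i+1) * (i+1).choose s + l.choose (2*(i+1)) * (i+1).choose s := by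
    intro i
    have h2 : 2*(i+1) = (2*i+1)+1 := by ring
    rw [h2, Nat.choose_succ_succ]
    ring
  rw [Finset.sum_congr rfl fun i _ => key i, Finset.sum_add_distrib]
  have hO : ∑ i ∈ Finset.range (l+1), l.choose (2*i+1) * (i+1).choose s = Osum l s := rfl
  have hE : (∑ i ∈ Finset.range (l+1), l.choose (2*(i+1)) * (i+1).choose s)
      + (l+1).choose (2*0) * Nat.choose 0 s = Esum l s := by
    have h1 : (l+1).choose (2*0) * Nat.choose 0 s = l.choose (2*0) * Nat.choose 0 s := by simp
    rw [h1, ← Finset.sum_range_succ' (fun i => l.choose (2*i) * i.choose s) (l+1)]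
    exact Esum_ext l s (l+2) (by omega)
  omega

lemma Osum_succ (l s : ℕ) : Osum (l+1) (s+1) = Osum l (s+1) + Esum l s + Esum l (s+1) := by
  have e0 : Osum (l+1) (s+1)
      = ∑ i ∈ Finset.range (l+1+1), (l+1).choose (2*i+1) * (i+1).choose (s+1) := rfl
  have key : ∀ i, (l+1).choose (2*i+1) * (i+1).choose (s+1)
      = l.choose (2*i+1) * (i+1).choose (s+1)
        + (l.choose (2*i) * i.choose s + l.choose (2*i) * i.choose (s+1)) := by
    intro i
    rw [Nat.choose_succ_succ l (2*i), Nat.choose_succ_succ i s]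
    ring
  rw [e0, Finset.sum_congr rfl fun i _ => key i, Finset.sum_add_distrib,
    Finset.sum_add_distrib]
  rw [Osum_ext l (s+1) (l+2) (by omega), Esum_ext l s (l+2) (by omega),
    Esum_ext l (s+1) (l+2) (by omega)]
  ring

lemma Osum_succ_zero (l : ℕ) : Osum (l+1) 0 = Esum l 0 + Osum l 0 := by
  have e0 : Osum (l+1) 0
      = ∑ i ∈ Finset.range (l+1+1), (l+1).choose (2*i+1) * (i+1).choose 0 := rfl
  have key : ∀ i, (l+1).choose (2*i+1) * (i+1).choose 0
      = l.choose (2*i+1) * (i+1).choose 0 + l.choose (2*i) * i.choose 0 := by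
    intro i
    rw [Nat.choose_succ_succ l (2*i)]
    simp [Nat.choose_zero_right]
    ring
  rw [e0, Finset.sum_congr rfl fun i _ => key i, Finset.sum_add_distrib]
  rw [Osum_ext l 0 (l+2) (by omega), Esum_ext l 0 (l+2) (by omega)]
  ring

lemma Esum_rec (l s : ℕ) : Esum (l+2) (s+1) = 2 * Esum (l+1) (s+1) + Esum l s := by
  rw [Esum_succ, Osum_succ, Esum_succ]
  ring

lemma EO_zero : ∀ l, Esum (l+1) 0 = 2^l ∧ Osum (l+1) 0 = 2^l := by
  intro l
  induction l with
  | zero => constructor <;> decide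
  | succ n ihn =>
    obtain ⟨hE, hO⟩ := ihn
    constructor
    · rw [Esum_succ, hE, hO]; ring
    · rw [Osum_succ_zero, hE, hO]; ring

lemma Esum_zero (l : ℕ) (hl : 1 ≤ l) : Esum l 0 = 2 ^ (l - 1) := by
  obtain ⟨m, rfl⟩ : ∃ m, l = m + 1 := ⟨l - 1, by omega⟩
  simpa using (EO_zero m).1

-- the key arithmetic recurrence
lemma Krec (m s : ℕ) : 2 ^ (m+3 - 2*(s+1)) * cycB (m+3) (s+1) =
    2 * (2 ^ (m+2 - 2*(s+1)) * cycB (m+2) (s+1)) + 2 ^ (m+1 - 2*s) * cycB (m+1) s := by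
  rcases s with _ | t
  · have c1 : cycB (m+3) (0+1) = (m+2) + 1 := by
      rw [cycB_CF (by omega) (by omega)]
      simp only [show m+3-(0+1) = m+2 from by omega, show m+3-(0+1)-1 = m+1 from by omega,
        show (0:ℕ)+1-1 = 0 from rfl, show (0:ℕ)+1 = 1 from rfl, Nat.choose_one_right, Nat.choose_zero_right]
    have c2 : cycB (m+2) (0+1) = (m+1) + 1 := by
      rw [cycB_CF (by omega) (by omega)]
      simp only [show m+2-(0+1) = m+1 from by omega, show m+2-(0+1)-1 = m from by omega,
        show (0:ℕ)+1-1 = 0 from rfl, show (0:ℕ)+1 = 1 from rfl, Nat.choose_one_right, Nat.choose_zero_right]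
    rw [c1, c2, cycB_zero_right]
    simp only [show m+3-2*(0+1) = m+1 from by omega, show m+2-2*(0+1) = m from by omega,
      show m+1-2*0 = m+1 from by omega]
    ring
  · rcases lt_trichotomy (m+1) (2*(t+1)) with hlt | heq | hgt
    · have c1 : cycB (m+3) (t+1+1) = 0 := by
        rw [cycB_CF (by omega) (by omega),
          Nat.choose_eq_zero_of_lt (by omega), Nat.choose_eq_zero_of_lt (by omega)]
      have c2 : cycB (m+2) (t+1+1) = 0 := by
        rw [cycB_CF (by omega) (by omega),
          Nat.choose_eq_zero_of_lt (by omega), Nat.choose_eq_zero_of_lt (by omega)]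
      have c3 : cycB (m+1) (t+1) = 0 := by
        rcases m with _ | m'
        · exact cycB_one t
        · rw [cycB_CF (by omega) (by omega),
            Nat.choose_eq_zero_of_lt (by omega), Nat.choose_eq_zero_of_lt (by omega)]
      rw [c1, c2, c3]
      ring
    · have c1 : cycB (m+3) (t+1+1) = 2 := by
        rw [cycB_CF (by omega) (by omega)]
        simp only [show m+3-(t+1+1) = t+2 from by omega,
          show m+3-(t+1+1)-1 = t+1 from by omega,
          show t+1+1-1 = t+1 from by omega, Nat.choose_self]
      have c2 : cycB (m+2) (t+1+1) = 0 := by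
        rw [cycB_CF (by omega) (by omega),
          Nat.choose_eq_zero_of_lt (by omega), Nat.choose_eq_zero_of_lt (by omega)]
      have c3 : cycB (m+1) (t+1) = 2 := by
        rw [cycB_CF (by omega) (by omega)]
        simp only [show m+1-(t+1) = t+1 from by omega,
          show m+1-(t+1)-1 = t from by omega,
          show t+1-1 = t from by omega, Nat.choose_self]
      rw [c1, c2, c3]
      simp only [show m+3-2*(t+1+1) = 0 from by omega, show m+2-2*(t+1+1) = 0 from by omega,
        show m+1-2*(t+1) = 0 from by omega, pow_zero]
      ring
    · obtain ⟨u, hu⟩ : ∃ u, m - t = u + 2 := ⟨m - t - 2, by omega⟩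
      obtain ⟨e, he⟩ : ∃ e, m = 2*t + 2 + e := ⟨m - (2*t + 2), by omega⟩
      have c1 : cycB (m+3) (t+1+1) = (u+2+1).choose (t+1+1) + (u+1+1).choose (t+1) := by
        rw [cycB_CF (by omega) (by omega)]
        simp only [show m+3-(t+1+1) = u+2+1 from by omega,
          show m+3-(t+1+1)-1 = u+1+1 from by omega,
          show u+2+1-1 = u+1+1 from by omega,
          show t+1+1-1 = t+1 from by omega]
      have c2 : cycB (m+2) (t+1+1) = (u+2).choose (t+2) + (u+1).choose (t+1) := by
        rw [cycB_CF (by omega) (by omega)]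
        simp only [show m+2-(t+1+1) = u+2 from by omega,
          show m+2-(t+1+1)-1 = u+1 from by omega,
          show u+2-1 = u+1 from by omega,
          show t+1+1-1 = t+1 from by omega, show t+1+1 = t+2 from rfl]
      have c3 : cycB (m+1) (t+1) = (u+1+1).choose (t+1) + (u+1).choose t := by
        rw [cycB_CF (by omega) (by omega)]
        simp only [show m+1-(t+1) = u+1+1 from by omega,
          show m+1-(t+1)-1 = u+1 from by omega,
          show u+1+1-1 = u+1 from by omega,
          show t+1-1 = t from by omega]
      rw [c1, c2, c3]
      rw [Nat.choose_succ_succ' (u+2) (t+1), Nat.choose_succ_succ' (u+1) t]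
      simp only [show m+3-2*(t+1+1) = e+1 from by omega, show m+2-2*(t+1+1) = e from by omega,
        show m+1-2*(t+1) = e+1 from by omega, show u+2 = u+1+1 from rfl,
        Nat.choose_succ_succ' (u+1) (t+1)]
      ring

theorem stmt1 (l s : ℕ) (hl : 1 ≤ l) :
    2 ^ (l - 2 * s) * cycB l s =
      2 * ∑ i ∈ Finset.range (l + 1), l.choose (2 * i) * i.choose s := by
  have main : ∀ l, 1 ≤ l → ∀ s, 2 ^ (l - 2 * s) * cycB l s = 2 * Esum l s := by
    intro l
    induction l using Nat.strong_induction_on with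
    | _ l ih =>
      rcases l with _ | _ | _ | m
      · omega
      · intro _ s
        rcases s with _ | s
        · decide
        · have h1 : cycB 1 (s+1) = 0 := cycB_one s
          have h2 : Esum 1 (s+1) = 0 := by
            unfold Esum
            rw [Finset.sum_range_succ, Finset.sum_range_succ, Finset.sum_range_zero]
            simp [Nat.choose_eq_zero_of_lt, Nat.choose]
          rw [h1, h2]; ring
      · intro _ s
        rcases s with _ | _ | s
        · decide
        · decide
        · have h1 : cycB 2 (s+2) = 0 := by
            rcases s with _ | s
            · decide
            · apply Nat.eq_zero_of_le_zero
              unfold cycB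
              rw [Nat.le_zero, Finset.card_eq_zero, Finset.filter_eq_empty_iff]
              rintro f - ⟨hc, -⟩
              have := onesCard_le f
              unfold onesCard at this
              omega
          have h2 : Esum 2 (s+2) = 0 := by
            unfold Esum
            rw [Finset.sum_range_succ, Finset.sum_range_succ, Finset.sum_range_succ,
              Finset.sum_range_zero]
            have e0 : Nat.choose 0 (s+2) = 0 := Nat.choose_eq_zero_of_lt (by omega)
            have e1 : Nat.choose 1 (s+2) = 0 := Nat.choose_eq_zero_of_lt (by omega)
            have e2 : Nat.choose 2 4 = 0 := by decide
            simp [e0, e1, e2]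
          rw [h1, h2]; ring
      · intro _ s
        have ih2 := ih (m+2) (by omega) (by omega)
        have ih1 := ih (m+1) (by omega) (by omega)
        rcases s with _ | s
        · rw [cycB_zero_right, Esum_zero (m+3) (by omega)]
          have h3 : m + 3 - 2 * 0 = m + 3 := by omega
          have h4 : m + 3 - 1 = m + 2 := by omega
          rw [h3, h4]; ring
        · rw [Esum_rec, Krec m s, ih2 (s+1), ih1 s]
          ring
  exact main l hl s
end

section
/- For every natural number l ≥ 1 and real numbers x, y, z, the polynomial a_l(x,y,z) := ∑_{k,r} a_{l,k,r} x^k y^{l-k} z^r satisfies a_l(x,y,z) = 2^{1-l} (x+y)^l ∑_i C(l,2i) (1 + 4xy(z-1)/(x+y)^2)^i, whenever x + y ≠ 0, where a_{l,k,r} counts cyclic binary sequences of length l with k ones and r ones followed by zeros. -/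
/-!
Weight a one by `x`, a zero by `y`, and a one followed by a zero additionally by `z`: the
weight `x ^ k * y ^ (l - k) * z ^ r` of a cyclic sequence is then a product of entries
`T (f i) (f (i + 1))` of a `2 × 2` transfer matrix `T`, so the left-hand side is
`trace (T ^ l)`. Since `T ^ 2 = (x + y) T - x y (1 - z)`, this trace is `λ₊ ^ l + λ₋ ^ l` with
`λ± = (x + y ± √D) / 2`, `D = (x + y) ^ 2 + 4 x y (z - 1)`, and in the binomial expansion of
`(x + y + √D) ^ l + (x + y - √D) ^ l` the odd powers of `√D` cancel.
-/

open Finset Matrix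

theorem cyc_last (m : ℕ) : cyc (Fin.last m) = 0 := by
  ext; simp [cyc]

theorem cyc_castSucc {m : ℕ} (j : Fin m) : cyc j.castSucc = j.succ := by
  ext; simp [cyc, Nat.mod_eq_of_lt (Nat.succ_lt_succ j.isLt)]

theorem Fin.snoc_apply_eq_cons_cyc {α : Type*} {m : ℕ} (v : Fin m → α) (a : α)
    (i : Fin (m + 1)) :
    (Fin.snoc v a : Fin (m + 1) → α) i = (Fin.cons a v : Fin (m + 1) → α) (cyc i) := by
  induction i using Fin.lastCases with
  | last => simp [cyc_last]
  | cast j => simp [cyc_castSucc]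

section Walks

variable {ι R : Type*} [Fintype ι] [DecidableEq ι] [CommSemiring R]

theorem Matrix.pow_succ_apply_eq_sum_prod (A : Matrix ι ι R) (n : ℕ) (a b : ι) :
    (A ^ (n + 1)) a b = ∑ v : Fin n → ι, ∏ i : Fin (n + 1),
      A ((Fin.cons a v : Fin (n + 1) → ι) i) ((Fin.snoc v b : Fin (n + 1) → ι) i) := by
  induction n generalizing a with
  | zero => simp [Fin.snoc]
  | succ n ih =>
    rw [pow_succ', mul_apply, ← (Fin.consEquiv fun _ => ι).sum_comp, Fintype.sum_prod_type]
    refine sum_congr rfl fun c _ => ?_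
    rw [ih, mul_sum]
    refine sum_congr rfl fun v _ => ?_
    rw [Fin.prod_univ_succ (n := n + 1)]
    simp [Fin.consEquiv, ← Fin.cons_snoc_eq_snoc_cons]

theorem Matrix.trace_pow_succ_eq_sum_prod_cyc (A : Matrix ι ι R) (m : ℕ) :
    trace (A ^ (m + 1)) = ∑ f : Fin (m + 1) → ι, ∏ i, A (f i) (f (cyc i)) := by
  rw [trace, ← (Fin.consEquiv fun _ => ι).sum_comp, Fintype.sum_prod_type]
  simp [Matrix.pow_succ_apply_eq_sum_prod, Fin.consEquiv, Fin.snoc_apply_eq_cons_cyc]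

end Walks

theorem Matrix.trace_pow_eq_add_pow {ι R : Type*} [Fintype ι] [DecidableEq ι] [CommRing R]
    {A : Matrix ι ι R} {a b : R} (hcard : Fintype.card ι = 2) (htr : trace A = a + b)
    (hsq : A ^ 2 = (a + b) • A - (a * b) • 1) (n : ℕ) :
    trace (A ^ n) = a ^ n + b ^ n := by
  induction n using Nat.twoStepInduction with
  | zero => simp [hcard, one_add_one_eq_two]
  | one => simpa using htr
  | more n ih₀ ih₁ =>
    rw [pow_add, hsq, mul_sub, Matrix.mul_smul, Matrix.mul_smul, mul_one, ← pow_succ, trace_sub,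
      trace_smul, trace_smul, ih₀, ih₁, smul_eq_mul, smul_eq_mul]
    ring

theorem sum_range_sum_range_card_filter_smul {α M : Type*} [Fintype α] [AddCommMonoid M]
    (g h : α → ℕ) {N : ℕ} (hg : ∀ a, g a ≤ N) (hh : ∀ a, h a ≤ N)
    (F : ℕ → ℕ → M) :
    ∑ k ∈ range (N + 1), ∑ r ∈ range (N + 1), #{a | g a = k ∧ h a = r} • F k r =
      ∑ a, F (g a) (h a) := by
  simp only [card_eq_sum_ones, sum_filter, sum_smul, ite_smul, one_smul, zero_smul]
  calc _ = ∑ k ∈ range (N + 1), ∑ a, ∑ r ∈ range (N + 1),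
        if g a = k ∧ h a = r then F k r else 0 := sum_congr rfl fun _ _ => sum_comm
    _ = _ := by
      rw [sum_comm]
      refine sum_congr rfl fun a _ => ?_
      simp [ite_and, hg, hh]

theorem add_pow_add_sub_pow {R : Type*} [CommRing R] (s e : R) (n : ℕ) :
    (s + e) ^ n + (s - e) ^ n =
      2 * ∑ i ∈ range (n / 2 + 1), n.choose (2 * i) * s ^ (n - 2 * i) * e ^ (2 * i) := by
  have hterm : ∀ m ∈ range (n + 1),
      e ^ m * s ^ (n - m) * n.choose m + (-e) ^ m * s ^ (n - m) * n.choose m =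
        if Even m then 2 * (n.choose m * s ^ (n - m) * e ^ m) else 0 := by
    intro m _
    split_ifs with hm
    · rw [hm.neg_pow]; ring
    · rw [(Nat.not_even_iff_odd.mp hm).neg_pow]; ring
  have heven : (range (n + 1)).filter Even = (range (n / 2 + 1)).image (2 * ·) := by
    ext m
    simp only [mem_filter, mem_range, mem_image]
    constructor
    · rintro ⟨hm, k, rfl⟩
      exact ⟨k, by omega, by ring⟩
    · rintro ⟨k, hk, rfl⟩
      exact ⟨by omega, k, by ring⟩
  rw [add_comm s, sub_eq_neg_add, add_pow, add_pow, ← sum_add_distrib, sum_congr rfl hterm,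
    ← sum_filter, heven, sum_image fun _ _ _ _ h => by simpa using h, mul_sum]

section TransferMatrix

variable {R : Type*} [CommSemiring R]

def transferMatrix (x y z : R) : Matrix Bool Bool R :=
  of fun a b => (if a then x else y) * (if a && !b then z else 1)

theorem trace_transferMatrix (x y z : R) : trace (transferMatrix x y z) = x + y := by
  simp [transferMatrix, trace]

theorem prod_transferMatrix_cyc (x y z : R) {l : ℕ} (f : Fin l → Bool) :
    ∏ i, transferMatrix x y z (f i) (f (cyc i)) =
      x ^ #{i | f i = true} * y ^ (l - #{i | f i = true}) *
        z ^ #{i | f i = true ∧ f (cyc i) = false} := by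
  have hzeros : #{i | ¬f i = true} = l - #{i | f i = true} := by
    rw [← compl_filter, card_compl, Fintype.card_fin]
  simp only [transferMatrix, of_apply, prod_mul_distrib, prod_ite, prod_const, one_pow, mul_one,
    hzeros, Bool.and_eq_true, Bool.not_eq_true']

theorem sum_cycA_mul_eq_trace_transferMatrix_pow (x y z : R) {l : ℕ} (hl : 0 < l) :
    ∑ k ∈ range (l + 1), ∑ r ∈ range (l + 1),
        (cycA l k r : R) * x ^ k * y ^ (l - k) * z ^ r =
      trace (transferMatrix x y z ^ l) := by
  obtain ⟨m, rfl⟩ : ∃ m, l = m + 1 := ⟨l - 1, by omega⟩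
  have hle : ∀ (p : Fin (m + 1) → Prop) [DecidablePred p], #{i | p i} ≤ m + 1 :=
    fun _ _ => (card_filter_le _ _).trans_eq (card_fin _)
  rw [trace_pow_succ_eq_sum_prod_cyc]
  simp only [prod_transferMatrix_cyc]
  rw [← sum_range_sum_range_card_filter_smul (fun f : Fin (m + 1) → Bool => #{i | f i = true})
    (fun f : Fin (m + 1) → Bool => #{i | f i = true ∧ f (cyc i) = false})
    (fun _ => hle _) (fun _ => hle _) fun k r => x ^ k * y ^ (m + 1 - k) * z ^ r]
  simp only [cycA, nsmul_eq_mul, mul_assoc]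

end TransferMatrix

theorem transferMatrix_sq {R : Type*} [CommRing R] (x y z : R) :
    transferMatrix x y z ^ 2 = (x + y) • transferMatrix x y z - (x * y * (1 - z)) • 1 := by
  ext a b
  cases a <;> cases b <;> simp [transferMatrix, sq, mul_apply] <;> ring

theorem trace_transferMatrix_pow (x y z : ℂ) (hxy : x + y ≠ 0) (n : ℕ) :
    trace (transferMatrix x y z ^ n) = (2 : ℂ) ^ ((1 : ℤ) - n) * (x + y) ^ n *
      ∑ i ∈ range (n / 2 + 1),
        (n.choose (2 * i) : ℂ) * (1 + 4 * x * y * (z - 1) / (x + y) ^ 2) ^ i := by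
  obtain ⟨e, he⟩ := IsAlgClosed.exists_pow_nat_eq ((x + y) ^ 2 + 4 * x * y * (z - 1)) two_pos
  have hsum : (x + y + e) / 2 + (x + y - e) / 2 = x + y := by ring
  have hprod : (x + y + e) / 2 * ((x + y - e) / 2) = x * y * (1 - z) := by
    linear_combination (-1 / 4 : ℂ) * he
  have hq : 1 + 4 * x * y * (z - 1) / (x + y) ^ 2 = e ^ 2 / (x + y) ^ 2 := by
    rw [he]
    field_simp
  have hterm : ∀ i ∈ range (n / 2 + 1),
      (n.choose (2 * i) : ℂ) * (x + y) ^ (n - 2 * i) * e ^ (2 * i) =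
        (x + y) ^ n * (n.choose (2 * i) * (1 + 4 * x * y * (z - 1) / (x + y) ^ 2) ^ i) := by
    intro i hi
    have hpow : (x + y) ^ n = (x + y) ^ (n - 2 * i) * (x + y) ^ (2 * i) := by
      rw [← pow_add, Nat.sub_add_cancel (by rw [mem_range] at hi; omega)]
    rw [hq, div_pow, ← pow_mul, ← pow_mul, hpow]
    field_simp
  rw [trace_pow_eq_add_pow (by simp) (by rw [hsum, trace_transferMatrix])
      (by rw [hsum, hprod, transferMatrix_sq]),
    div_pow, div_pow, ← add_div, add_pow_add_sub_pow, sum_congr rfl hterm, ← mul_sum,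
    zpow_sub₀ two_ne_zero, zpow_one, zpow_natCast]
  ring

theorem stmt2 (l : ℕ) (hl : 1 ≤ l) (x y z : ℝ) (hxy : x + y ≠ 0) :
    ∑ k ∈ Finset.range (l + 1), ∑ r ∈ Finset.range (l + 1),
        (cycA l k r : ℝ) * x ^ k * y ^ (l - k) * z ^ r =
      (2 : ℝ) ^ ((1 : ℤ) - (l : ℤ)) * (x + y) ^ l *
        ∑ i ∈ Finset.range (l / 2 + 1),
          (l.choose (2 * i) : ℝ) * (1 + 4 * x * y * (z - 1) / (x + y) ^ 2) ^ i := by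
  apply Complex.ofReal_injective
  push_cast
  rw [sum_cycA_mul_eq_trace_transferMatrix_pow _ _ _ hl,
    trace_transferMatrix_pow _ _ _ (by exact_mod_cast hxy)]
end

section
/- Let p00, p01, p10, p11 be nonnegative reals summing to 1, let p0* = p00 + p01, p1* = p10 + p11, and let q = (√(p11·p00) − √(p01·p10))^2. Then for z* = (p01·p10/(p00·p11))^{1/4} (assuming p00·p11 > 0), the identity (p00·z* + p01/z*)/p0* · (p10/z* + p11·z*)/p1* = 1 − q/(p0*·p1*) holds, assuming p0* > 0 and p1* > 0. -/
/-!
Expanding the product gives `p00 p10 + p01 p11 + p00 p11 z² + p01 p10 / z²`. The choice of `z`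
makes `z² = √(p01 p10) / √(p00 p11)`, which balances the two `z`-dependent terms: both equal
`√(p00 p11) √(p01 p10)`. The same cross term appears when `(√(p11 p00) − √(p01 p10))²` is
subtracted from `p0* p1*`.
-/

theorem Real.rpow_one_div_four_sq {x : ℝ} (hx : 0 ≤ x) : (x ^ ((1 : ℝ) / 4)) ^ 2 = √x := by
  rw [← Real.rpow_natCast, ← Real.rpow_mul hx, Real.sqrt_eq_rpow]
  norm_num

theorem mul_add_div_mul_div_add_mul_of_sq_eq {a b c d z : ℝ} (had : 0 < a * d) (hbc : 0 < b * c)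
    (hz : z ^ 2 = √(b * c) / √(a * d)) :
    (a * z + b / z) * (c / z + d * z) = (a + b) * (c + d) - (√(a * d) - √(b * c)) ^ 2 := by
  have hu : 0 < √(a * d) := Real.sqrt_pos.2 had
  have hv : 0 < √(b * c) := Real.sqrt_pos.2 hbc
  have hz0 : z ≠ 0 := by
    rintro rfl
    rw [zero_pow two_ne_zero] at hz
    exact (div_pos hv hu).ne' hz.symm
  have expand :
      (a * z + b / z) * (c / z + d * z) = a * c + b * d + a * d * z ^ 2 + b * c / z ^ 2 := by
    field_simp
    ring
  have hadz : a * d * z ^ 2 = √(a * d) * √(b * c) := by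
    rw [hz]
    field_simp
    rw [Real.sq_sqrt had.le]
  have hbcz : b * c / z ^ 2 = √(a * d) * √(b * c) := by
    rw [hz]
    field_simp
    rw [Real.sq_sqrt hbc.le]
  rw [expand, hadz, hbcz]
  linear_combination Real.sq_sqrt had.le + Real.sq_sqrt hbc.le

theorem stmt4_general (p00 p01 p10 p11 : ℝ)
    (hpos : 0 < p00 * p11) (hpos' : 0 < p01 * p10)
    (h0 : 0 < p00 + p01) (h1 : 0 < p10 + p11) :
    (p00 * (p01 * p10 / (p00 * p11)) ^ ((1 : ℝ) / 4) +
        p01 / (p01 * p10 / (p00 * p11)) ^ ((1 : ℝ) / 4)) / (p00 + p01) *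
      ((p10 / (p01 * p10 / (p00 * p11)) ^ ((1 : ℝ) / 4) +
        p11 * (p01 * p10 / (p00 * p11)) ^ ((1 : ℝ) / 4)) / (p10 + p11)) =
      1 - (Real.sqrt (p11 * p00) - Real.sqrt (p01 * p10)) ^ 2 /
        ((p00 + p01) * (p10 + p11)) := by
  have hz : ((p01 * p10 / (p00 * p11)) ^ ((1 : ℝ) / 4)) ^ 2 = √(p01 * p10) / √(p00 * p11) := by
    rw [Real.rpow_one_div_four_sq (div_pos hpos' hpos).le, Real.sqrt_div' _ hpos.le]
  rw [div_mul_div_comm, mul_add_div_mul_div_add_mul_of_sq_eq hpos hpos' hz, mul_comm p11,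
    sub_div, div_self (mul_pos h0 h1).ne']

theorem stmt4 (p00 p01 p10 p11 : ℝ)
    (h00 : 0 ≤ p00) (h01 : 0 ≤ p01) (h10 : 0 ≤ p10) (h11 : 0 ≤ p11)
    (hsum : p00 + p01 + p10 + p11 = 1)
    (hpos : 0 < p00 * p11) (hpos' : 0 < p01 * p10)
    (h0 : 0 < p00 + p01) (h1 : 0 < p10 + p11) :
    (p00 * (p01 * p10 / (p00 * p11)) ^ ((1 : ℝ) / 4) +
        p01 / (p01 * p10 / (p00 * p11)) ^ ((1 : ℝ) / 4)) / (p00 + p01) *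
      ((p10 / (p01 * p10 / (p00 * p11)) ^ ((1 : ℝ) / 4) +
        p11 * (p01 * p10 / (p00 * p11)) ^ ((1 : ℝ) / 4)) / (p10 + p11)) =
      1 - (Real.sqrt (p11 * p00) - Real.sqrt (p01 * p10)) ^ 2 /
        ((p00 + p01) * (p10 + p11)) :=
  stmt4_general p00 p01 p10 p11 hpos hpos' h0 h1
end

section
/- Let π be a permutation of [n] that fixes exactly n − m points (moves exactly m points), and let σ be the induced permutation on the set of 2-element subsets of [n] given by σ({i,j}) = {π(i), π(j)}. Then the number c_1 of fixed points of σ satisfies C(n−m, 2) ≤ c_1 ≤ C(n−m, 2) + m/2, and consequently C(n,2) − c_1 ≥ m(2n − m − 2)/2. -/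
open Finset

private lemma two_mul_choose_two (x : ℕ) : 2 * x.choose 2 = x * (x - 1) := by
  rcases x with _|y
  · simp
  · rw [Nat.choose_two_right]
    simp only [Nat.add_sub_cancel]
    rw [Nat.mul_div_cancel']
    rw [Nat.mul_comm]
    exact (Nat.even_mul_succ_self y).two_dvd

theorem stmt8 (n m : ℕ) (π : Equiv.Perm (Fin n))
    (hm : (Finset.univ.filter (fun i => π i ≠ i)).card = m) :
    (n - m).choose 2 ≤
        (((Finset.univ : Finset (Fin n)).powersetCard 2).filter
          (fun s => s.image π = s)).card ∧
    2 * (((Finset.univ : Finset (Fin n)).powersetCard 2).filter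
          (fun s => s.image π = s)).card ≤ 2 * (n - m).choose 2 + m ∧
    m * (2 * n - m - 2) ≤
      2 * (n.choose 2 -
        (((Finset.univ : Finset (Fin n)).powersetCard 2).filter
          (fun s => s.image π = s)).card) := by
  classical
  set S := ((Finset.univ : Finset (Fin n)).powersetCard 2).filter
      (fun s => s.image π = s) with hSdef
  set M := (Finset.univ : Finset (Fin n)).filter (fun i => π i ≠ i) with hMdef
  set F := (Finset.univ : Finset (Fin n)).filter (fun i => π i = i) with hFdef
  have hsplit : F.card + M.card = n := by
    rw [hFdef, hMdef]
    rw [Finset.card_filter_add_card_filter_not]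
    simp
  have hmn : m ≤ n := by omega
  have hFcard : F.card = n - m := by omega
  -- key structure lemma
  have key : ∀ s ∈ S, ∀ i ∈ s, π i ≠ i → s = {i, π i} := by
    intro s hs i hi hne
    simp only [hSdef, mem_filter, mem_powersetCard] at hs
    obtain ⟨⟨_, hcard⟩, himg⟩ := hs
    obtain ⟨a, b, hab, rfl⟩ := Finset.card_eq_two.mp hcard
    have hπi : π i ∈ ({a, b} : Finset (Fin n)) := by
      rw [← himg]; exact Finset.mem_image_of_mem _ hi
    simp only [mem_insert, mem_singleton] at hi hπi
    rcases hi with rfl | rfl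
    · have hb : π i = b := by
        rcases hπi with h | h
        · exact absurd h hne
        · exact h
      rw [hb]
    · have ha : π i = a := by
        rcases hπi with h | h
        · exact h
        · exact absurd h hne
      rw [ha, Finset.pair_comm]
  -- every member of a non-F-pair is moved
  have moved : ∀ s ∈ S, (¬ s ⊆ F) → ∀ j ∈ s, π j ≠ j := by
    intro s hs hnsub j hj
    obtain ⟨i, hi, hmov⟩ : ∃ i ∈ s, π i ≠ i := by
      by_contra h
      push_neg at h
      exact hnsub fun x hx => by
        simp only [hFdef, mem_filter]; exact ⟨mem_univ x, h x hx⟩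
    have hseq := key s hs i hi hmov
    subst hseq
    simp only [mem_insert, mem_singleton] at hj
    rcases hj with rfl | rfl
    · exact hmov
    · intro h
      exact hmov (π.injective h)
  -- lower bound: pairs in F
  have hA : F.powersetCard 2 ⊆ S := by
    intro s hs
    simp only [mem_powersetCard] at hs
    simp only [hSdef, mem_filter, mem_powersetCard]
    refine ⟨⟨subset_univ s, hs.2⟩, ?_⟩
    apply Finset.Subset.antisymm
    · intro x hx
      obtain ⟨y, hy, rfl⟩ := Finset.mem_image.mp hx
      have : π y = y := (mem_filter.mp (hs.1 hy)).2
      rwa [this]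
    · intro x hx
      have : π x = x := (mem_filter.mp (hs.1 hx)).2
      exact Finset.mem_image.mpr ⟨x, hx, this⟩
  have h1 : (n - m).choose 2 ≤ S.card := by
    calc (n - m).choose 2 = (F.powersetCard 2).card := by
          rw [Finset.card_powersetCard, hFcard]
      _ ≤ S.card := Finset.card_le_card hA
  -- upper bound
  set B := S \ F.powersetCard 2 with hBdef
  have hB2 : ∀ s ∈ B, s.card = 2 := by
    intro s hs
    have := (mem_filter.mp (Finset.mem_sdiff.mp hs).1).1
    exact (mem_powersetCard.mp this).2
  have hBdisj : (B : Set (Finset (Fin n))).PairwiseDisjoint id := by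
    intro s hs t ht hst
    simp only [Finset.disjoint_left, id]
    intro x hxs hxt
    apply hst
    have hsS := (Finset.mem_sdiff.mp hs).1
    have htS := (Finset.mem_sdiff.mp ht).1
    have hsnF : ¬ s ⊆ F := by
      intro h
      exact (Finset.mem_sdiff.mp hs).2 (mem_powersetCard.mpr ⟨h, hB2 s hs⟩)
    have htnF : ¬ t ⊆ F := by
      intro h
      exact (Finset.mem_sdiff.mp ht).2 (mem_powersetCard.mpr ⟨h, hB2 t (Finset.mem_sdiff.mpr ⟨htS, (Finset.mem_sdiff.mp ht).2⟩)⟩)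
    have hxmov : π x ≠ x := moved s hsS hsnF x hxs
    rw [key s hsS x hxs hxmov, key t htS x hxt hxmov]
  have hBsub : B.biUnion id ⊆ M := by
    intro x hx
    obtain ⟨s, hs, hxs⟩ := Finset.mem_biUnion.mp hx
    have hsnF : ¬ s ⊆ F := by
      intro h
      exact (Finset.mem_sdiff.mp hs).2 (mem_powersetCard.mpr ⟨h, hB2 s hs⟩)
    simp only [hMdef, mem_filter]
    exact ⟨mem_univ x, moved s (Finset.mem_sdiff.mp hs).1 hsnF x hxs⟩
  have hBcard : 2 * B.card ≤ m := by
    have : (B.biUnion id).card = ∑ s ∈ B, s.card := by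
      apply Finset.card_biUnion
      intro s hs t ht hst
      exact hBdisj hs ht hst
    have hsum : ∑ s ∈ B, s.card = 2 * B.card := by
      rw [Finset.sum_congr rfl hB2, Finset.sum_const, smul_eq_mul, mul_comm]
    have hle : (B.biUnion id).card ≤ M.card := Finset.card_le_card hBsub
    omega
  have h2 : 2 * S.card ≤ 2 * (n - m).choose 2 + m := by
    have : S.card ≤ (F.powersetCard 2).card + B.card := by
      have : S ⊆ F.powersetCard 2 ∪ B := by
        intro s hs
        rcases em (s ∈ F.powersetCard 2) with h | h
        · exact Finset.mem_union_left _ h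
        · exact Finset.mem_union_right _ (Finset.mem_sdiff.mpr ⟨hs, h⟩)
      calc S.card ≤ (F.powersetCard 2 ∪ B).card := Finset.card_le_card this
        _ ≤ _ := Finset.card_union_le _ _
    have hAcard : (F.powersetCard 2).card = (n - m).choose 2 := by
      rw [Finset.card_powersetCard, hFcard]
    omega
  refine ⟨h1, h2, ?_⟩
  -- third part
  have hm1 : m ≠ 1 := by
    intro h
    rw [h] at hm
    obtain ⟨i, hi⟩ := Finset.card_eq_one.mp hm
    have himem : i ∈ ({i} : Finset (Fin n)) := mem_singleton_self i
    rw [← hi] at himem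
    have hne : π i ≠ i := (mem_filter.mp himem).2
    have : π i ∈ Finset.univ.filter (fun j => π j ≠ j) := by
      simp only [mem_filter]
      exact ⟨mem_univ _, fun h' => hne (π.injective h')⟩
    rw [← hMdef, hi, mem_singleton] at this
    exact hne this
  have hcmax : S.card ≤ n.choose 2 := by
    have : S ⊆ (Finset.univ : Finset (Fin n)).powersetCard 2 := filter_subset _ _
    calc S.card ≤ _ := Finset.card_le_card this
      _ = n.choose 2 := by rw [Finset.card_powersetCard]; simp
  have e1 := two_mul_choose_two n
  have e2 := two_mul_choose_two (n - m)
  have hid : (n - m) * (n - m - 1) + m + m * (2 * n - m - 2) ≤ n * (n - 1) := by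
    obtain ⟨k, rfl⟩ : ∃ k, n = k + m := ⟨n - m, by omega⟩
    rcases m with _ | _ | l
    · simp
    · exact absurd rfl hm1
    · have r1 : k + (l + 2) - (l + 2) = k := by omega
      have r2 : 2 * (k + (l + 2)) - (l + 2) - 2 = 2 * k + l := by omega
      have r3 : k + (l + 2) - 1 = k + l + 1 := by omega
      rw [r1, r2, r3]
      rcases k with _ | j
      · simp; exact le_of_eq (by ring)
      · have r4 : j + 1 - 1 = j := rfl
        rw [r4]
        exact le_of_eq (by ring)
  omega
end

section
/- Let G_a and G_b be graphs on vertex set [n], and let π be an automorphism of the intersection graph G_a ∩ G_b (the graph with edge set E(G_a) ∩ E(G_b)). Let σ be the induced action of π on 2-element subsets of [n]. Then Δ(G_a ∘ σ, G_b) ≤ Δ(G_a, G_b), where Δ(G,H) is the size of the symmetric difference of the edge sets of G and H, and G_a ∘ σ denotes the graph whose edge indicator at e is the edge indicator of G_a at σ(e). -/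
/-!
Writing `A`, `B` for the edge sets and `A'` for the edge set of `G_a ∘ σ`, we have
`|A' Δ B| = |A'| + |B| - 2 |A' ∩ B|`. Since `σ` is injective on pairs, `|A'| ≤ |A|`, and since `σ`
maps `A ∩ B` into itself, every common edge `e` has `σ e ∈ A`, so `A ∩ B ⊆ A' ∩ B`.
-/

open Finset

variable {α : Type*}

theorem card_filter_ne_add_two_mul_card_filter_and (S : Finset α) (f g : α → Bool) :
    #(S.filter fun s => f s ≠ g s) + 2 * #(S.filter fun s => f s && g s) =
      #(S.filter fun s => f s) + #(S.filter fun s => g s) := by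
  simp only [card_filter, mul_sum, ← sum_add_distrib]
  refine sum_congr rfl fun s _ => ?_
  cases f s <;> cases g s <;> rfl

theorem card_filter_comp_le (S : Finset α) (f : α → Bool) {σ : α → α}
    (hσ : Set.InjOn σ S) (hmaps : Set.MapsTo σ S S) :
    #(S.filter fun s => f (σ s)) ≤ #(S.filter fun s => f s) :=
  card_le_card_of_injOn σ (fun s hs => by
    simp only [coe_filter, Set.mem_ofPred_eq] at hs ⊢
    exact ⟨hmaps hs.1, hs.2⟩) (hσ.mono fun s hs => (mem_filter.mp hs).1)

theorem card_filter_comp_ne_le (S : Finset α) (f g : α → Bool) {σ : α → α}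
    (hσ : Set.InjOn σ S) (hmaps : Set.MapsTo σ S S)
    (hcommon : ∀ s ∈ S, f s = true → g s = true → f (σ s) = true) :
    #(S.filter fun s => f (σ s) ≠ g s) ≤ #(S.filter fun s => f s ≠ g s) := by
  have hA := card_filter_comp_le S f hσ hmaps
  have hAB : #(S.filter fun s => f s && g s) ≤ #(S.filter fun s => f (σ s) && g s) := by
    refine card_le_card fun s hs => ?_
    simp only [mem_filter, Bool.and_eq_true] at hs ⊢
    exact ⟨hs.1, hcommon s hs.1 hs.2.1 hs.2.2, hs.2.2⟩
  have hD := card_filter_ne_add_two_mul_card_filter_and S f g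
  have hD' := card_filter_ne_add_two_mul_card_filter_and S (fun s => f (σ s)) g
  omega

/-- If `π` is an automorphism of the intersection graph `G_a ∩ G_b`, then applying the induced
permutation `σ` on vertex pairs to `G_a` cannot increase the symmetric difference with `G_b`.
Graphs on `[n]` are modeled as edge-indicator functions on 2-element subsets of `Fin n`. -/
theorem stmt10 (n : ℕ) (Ga Gb : Finset (Fin n) → Bool) (π : Equiv.Perm (Fin n))
    (haut : ∀ s ∈ (Finset.univ : Finset (Fin n)).powersetCard 2,
      (Ga (s.image π) && Gb (s.image π)) = (Ga s && Gb s)) :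
    ((((Finset.univ : Finset (Fin n)).powersetCard 2).filter
        (fun s => Ga (s.image π) ≠ Gb s)).card) ≤
      ((((Finset.univ : Finset (Fin n)).powersetCard 2).filter
        (fun s => Ga s ≠ Gb s)).card) := by
  refine card_filter_comp_ne_le _ Ga Gb (image_injective π.injective).injOn ?_ ?_
  · intro s hs
    simp only [mem_coe, mem_powersetCard_univ] at hs ⊢
    rwa [card_image_of_injective _ π.injective]
  · intro s hs hGa hGb
    have h := haut s hs
    rw [hGa, hGb, Bool.true_and, Bool.and_eq_true] at h
    exact h.1
end

section
/- Let G_a, G_b be graphs on [n] with E(G_a) ∩ E(G_b) = ∅, let u ≠ v be vertices with N_a(u) ∩ N_b(v) = ∅ and N_a(v) ∩ N_b(u) = ∅, where N_a, N_b denote neighborhoods in G_a, G_b. Let π be the transposition exchanging u and v, and σ its induced action on 2-element subsets. Then Δ(G_a ∘ σ, G_b) = Δ(G_a, G_b). -/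
/-- If `G_a` and `G_b` have disjoint edge sets and the cross-neighborhood conditions
`N_a(u) ∩ N_b(v) = ∅` and `N_a(v) ∩ N_b(u) = ∅` hold, then the transposition of `u` and `v`
leaves the symmetric difference of the edge sets unchanged.  Graphs on `[n]` are modeled as
edge-indicator functions on 2-element subsets of `Fin n`. -/
theorem stmt17 (n : ℕ) (Ga Gb : Finset (Fin n) → Bool) (u v : Fin n) (huv : u ≠ v)
    (hdisj : ∀ s ∈ (Finset.univ : Finset (Fin n)).powersetCard 2,
      ¬(Ga s = true ∧ Gb s = true))
    (h1 : ∀ i : Fin n, i ≠ u → i ≠ v → ¬(Ga {u, i} = true ∧ Gb {v, i} = true))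
    (h2 : ∀ i : Fin n, i ≠ u → i ≠ v → ¬(Ga {v, i} = true ∧ Gb {u, i} = true)) :
    ((((Finset.univ : Finset (Fin n)).powersetCard 2).filter
        (fun s => Ga (s.image (Equiv.swap u v)) ≠ Gb s)).card) =
      ((((Finset.univ : Finset (Fin n)).powersetCard 2).filter
        (fun s => Ga s ≠ Gb s)).card) := by
  classical
  set σ : Finset (Fin n) → Finset (Fin n) := fun s => s.image (Equiv.swap u v) with hσ
  set P : Finset (Finset (Fin n)) := Finset.univ.powersetCard 2 with hP
  have hinv : ∀ s, σ (σ s) = s := by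
    intro s
    ext a
    simp [hσ, Equiv.swap_apply_self]
  have hmem : ∀ s ∈ P, σ s ∈ P := by
    intro s hs
    rw [hP, Finset.mem_powersetCard_univ] at hs ⊢
    rw [hσ]
    rw [Finset.card_image_of_injective _ (Equiv.injective _)]
    exact hs
  have hre : ∀ f : Finset (Fin n) → ℕ, ∑ s ∈ P, f (σ s) = ∑ s ∈ P, f s := by
    intro f
    exact Finset.sum_nbij' σ σ hmem hmem (fun s _ => hinv s) (fun s _ => hinv s)
      (fun s _ => rfl)
  have key : ∀ x y : Fin n, x ≠ y →
      ¬(Ga {x, y} = true ∧ Gb {Equiv.swap u v x, Equiv.swap u v y} = true) := by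
    intro x y hxy
    have hmemxy : ({x, y} : Finset (Fin n)) ∈ Finset.univ.powersetCard 2 := by
      rw [Finset.mem_powersetCard_univ]; exact Finset.card_pair hxy
    rcases eq_or_ne x u with hxu | hxu
    · rcases eq_or_ne y v with hyv | hyv
      · rw [hxu, hyv] at hmemxy ⊢
        simp only [Equiv.swap_apply_left, Equiv.swap_apply_right]
        rw [Finset.pair_comm v u]
        exact hdisj _ hmemxy
      · have hyu : y ≠ u := fun h => hxy (hxu.trans h.symm)
        rw [hxu]
        simp only [Equiv.swap_apply_left, Equiv.swap_apply_of_ne_of_ne hyu hyv]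
        exact h1 y hyu hyv
    · rcases eq_or_ne x v with hxv | hxv
      · rcases eq_or_ne y u with hyu | hyu
        · rw [hxv, hyu] at hmemxy ⊢
          simp only [Equiv.swap_apply_right, Equiv.swap_apply_left]
          rw [Finset.pair_comm u v]
          exact hdisj _ hmemxy
        · have hyv : y ≠ v := fun h => hxy (hxv.trans h.symm)
          rw [hxv]
          simp only [Equiv.swap_apply_right, Equiv.swap_apply_of_ne_of_ne hyu hyv]
          exact h2 y hyu hyv
      · rcases eq_or_ne y u with hyu | hyu
        · rw [hyu]
          simp only [Equiv.swap_apply_of_ne_of_ne hxu hxv, Equiv.swap_apply_left]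
          rw [Finset.pair_comm x u, Finset.pair_comm x v]
          exact h1 x hxu hxv
        · rcases eq_or_ne y v with hyv | hyv
          · rw [hyv]
            simp only [Equiv.swap_apply_of_ne_of_ne hxu hxv, Equiv.swap_apply_right]
            rw [Finset.pair_comm x v, Finset.pair_comm x u]
            exact h2 x hxu hxv
          · simp only [Equiv.swap_apply_of_ne_of_ne hxu hxv,
              Equiv.swap_apply_of_ne_of_ne hyu hyv]
            exact hdisj _ hmemxy
  have hcross : ∀ s ∈ P, ¬(Ga s = true ∧ Gb (σ s) = true) := by
    intro s hs
    rw [hP, Finset.mem_powersetCard_univ] at hs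
    obtain ⟨x, y, hxy, rfl⟩ := Finset.card_eq_two.mp hs
    have : σ {x, y} = {Equiv.swap u v x, Equiv.swap u v y} := by
      simp [hσ, Finset.image_insert]
    rw [this]
    exact key x y hxy
  have bkey : ∀ a1 a2 b1 b2 : Bool, ¬(a1 = true ∧ b1 = true) → ¬(a2 = true ∧ b2 = true) →
      ¬(a1 = true ∧ b2 = true) → ¬(a2 = true ∧ b1 = true) →
      ((if a2 ≠ b1 then 1 else 0) + (if a1 ≠ b2 then 1 else 0) : ℕ)
        = (if a1 ≠ b1 then 1 else 0) + (if a2 ≠ b2 then 1 else 0) := by decide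
  have hL : (P.filter (fun s => Ga (σ s) ≠ Gb s)).card
      = ∑ s ∈ P, (if Ga (σ s) ≠ Gb s then 1 else 0) := by
    rw [Finset.card_filter]
  have hR : (P.filter (fun s => Ga s ≠ Gb s)).card
      = ∑ s ∈ P, (if Ga s ≠ Gb s then 1 else 0) := by
    rw [Finset.card_filter]
  have hL2 : ∑ s ∈ P, (if Ga (σ s) ≠ Gb s then 1 else 0)
      = ∑ s ∈ P, (if Ga s ≠ Gb (σ s) then 1 else 0) := by
    have := hre (fun t => if Ga t ≠ Gb (σ t) then 1 else 0)
    simpa only [hinv] using this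
  have hR2 : ∑ s ∈ P, (if Ga (σ s) ≠ Gb (σ s) then 1 else 0)
      = ∑ s ∈ P, (if Ga s ≠ Gb s then 1 else 0) :=
    hre (fun t => if Ga t ≠ Gb t then 1 else 0)
  have hmain : 2 * (P.filter (fun s => Ga (σ s) ≠ Gb s)).card
      = 2 * (P.filter (fun s => Ga s ≠ Gb s)).card := by
    rw [hL, hR, two_mul, two_mul]
    nth_rewrite 2 [hL2]
    nth_rewrite 1 [← hR2]
    rw [← Finset.sum_add_distrib, ← Finset.sum_add_distrib]
    refine Finset.sum_congr rfl (fun s hs => ?_)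
    exact (bkey (Ga s) (Ga (σ s)) (Gb s) (Gb (σ s)) (hdisj s hs)
      (hdisj (σ s) (hmem s hs)) (hcross s hs)
      (by have := hcross (σ s) (hmem s hs); rwa [hinv] at this)).trans (add_comm _ _)
  exact Nat.eq_of_mul_eq_mul_left (by norm_num) hmain
end
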